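/- Let X be a Banach space with type p ∈ (1,2] and let (S,Σ,μ) be a σ-finite measure space. Then there exists a constant C ≥ 0 (depending only on p and X) such that for every N ≥ 1, all f_1,…,f_N ∈ L^{p,∞}(S) which are identically distributed (i.e. μ(|f_n|>t) = μ(|f_1|>t) for all t>0 and all n) and all x_1,…,x_N ∈ X, ‖f_1‖_{L^{p,∞}(S)} · (E‖Σ_{n=1}^N r_n x_n‖_X²)^{1/2} ≤ C · ( ∫_S ( E‖Σ_{n=1}^N r_n f_n(s) x_n‖_X² )^{p/2} dμ(s) )^{1/p}. -/

import Mathlib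

open MeasureTheory ENNReal

noncomputable section

/-- The Rademacher average `𝔼 ‖∑ₙ rₙ xₙ‖²`, realized concretely as the average over all
sign choices `ε : Fin N → Bool`.  For a Rademacher sequence `(rₙ)` on any probability space
this equals `𝔼 ‖∑ₙ rₙ xₙ‖²`. -/
def radAvg {E : Type*} [NormedAddCommGroup E] [NormedSpace ℝ E] {N : ℕ} (x : Fin N → E) : ℝ :=
  (∑ ε : Fin N → Bool, ‖∑ n, (if ε n then (1 : ℝ) else -1) • x n‖ ^ 2) / 2 ^ N

section Rad

variable {X : Type*} [NormedAddCommGroup X] [NormedSpace ℝ X] {N : ℕ}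

/-- sign of a boolean -/
def sg (b : Bool) : ℝ := if b then 1 else -1

lemma sg_mul (a b : Bool) : sg a * sg b = sg (a == b) := by
  cases a <;> cases b <;> simp [sg]

lemma abs_sg (a : Bool) : |sg a| = 1 := by cases a <;> simp [sg]

lemma radAvg_eq (x : Fin N → X) :
    radAvg x = (∑ ε : Fin N → Bool, ‖∑ n, sg (ε n) • x n‖ ^ 2) / 2 ^ N := rfl

lemma radAvg_nonneg (x : Fin N → X) : 0 ≤ radAvg x := by
  apply div_nonneg _ (by positivity)
  exact Finset.sum_nonneg fun _ _ => by positivity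

lemma radAvg_congr {x y : Fin N → X} (h : ∀ n, x n = y n) : radAvg x = radAvg y := by
  congr 1; exact funext h

lemma radAvg_smul (c : ℝ) (x : Fin N → X) :
    radAvg (fun n => c • x n) = c ^ 2 * radAvg x := by
  rw [radAvg_eq, radAvg_eq]
  rw [show (∑ ε : Fin N → Bool, ‖∑ n, sg (ε n) • c • x n‖ ^ 2)
      = ∑ ε : Fin N → Bool, c ^ 2 * ‖∑ n, sg (ε n) • x n‖ ^ 2 from
    Finset.sum_congr rfl fun ε _ => by
      rw [show (∑ n, sg (ε n) • c • x n) = c • ∑ n, sg (ε n) • x n by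
        rw [Finset.smul_sum]; exact Finset.sum_congr rfl fun n _ => smul_comm _ _ _]
      rw [norm_smul, mul_pow, Real.norm_eq_abs, sq_abs]]
  rw [← Finset.mul_sum, mul_div_assoc]

lemma beq_beq_cancel (a b : Bool) : ((a == b) == b) = a := by
  cases a <;> cases b <;> rfl

lemma radAvg_flip (c : Fin N → Bool) (x : Fin N → X) :
    radAvg (fun n => sg (c n) • x n) = radAvg x := by
  classical
  rw [radAvg_eq, radAvg_eq]
  congr 1
  have hinv : Function.Involutive (fun (ε : Fin N → Bool) => fun n => (ε n == c n)) :=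
    fun ε => by funext n; exact beq_beq_cancel _ _
  rw [← Equiv.sum_comp hinv.toPerm (fun ε => ‖∑ n, sg (ε n) • x n‖ ^ 2)]
  refine Finset.sum_congr rfl fun ε _ => ?_
  have h2 : (∑ n, sg (ε n) • sg (c n) • x n) = ∑ n : Fin N, sg (Function.Involutive.toPerm _ hinv ε n) • x n := by
    refine Finset.sum_congr rfl fun n _ => ?_
    have h1 : Function.Involutive.toPerm _ hinv ε n = (ε n == c n) := by
      rw [Function.Involutive.coe_toPerm]
    rw [h1, ← sg_mul, ← smul_smul]
  rw [h2]

lemma norm_combo_sq {A b : X} {t : ℝ} (ht : |t| ≤ 1) :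
    ‖A + t • b‖ ^ 2 + ‖A - t • b‖ ^ 2 ≤ ‖A + b‖ ^ 2 + ‖A - b‖ ^ 2 := by
  have h1 : -1 ≤ t := neg_le_of_abs_le ht
  have h2 : t ≤ 1 := le_of_abs_le ht
  set α := (1 + t) / 2 with hα
  set β := (1 - t) / 2 with hβ
  have hα0 : 0 ≤ α := by rw [hα]; linarith
  have hβ0 : 0 ≤ β := by rw [hβ]; linarith
  have e1 : A + t • b = α • (A + b) + β • (A - b) := by
    rw [hα, hβ]; match_scalars <;> ring
  have e2 : A - t • b = β • (A + b) + α • (A - b) := by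
    rw [hα, hβ]; match_scalars <;> ring
  have n1 : ‖A + t • b‖ ≤ α * ‖A + b‖ + β * ‖A - b‖ := by
    rw [e1]
    refine (norm_add_le _ _).trans ?_
    rw [norm_smul, norm_smul, Real.norm_eq_abs, Real.norm_eq_abs,
      abs_of_nonneg hα0, abs_of_nonneg hβ0]
  have n2 : ‖A - t • b‖ ≤ β * ‖A + b‖ + α * ‖A - b‖ := by
    rw [e2]
    refine (norm_add_le _ _).trans ?_
    rw [norm_smul, norm_smul, Real.norm_eq_abs, Real.norm_eq_abs,
      abs_of_nonneg hβ0, abs_of_nonneg hα0]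
  have hαβ : α + β = 1 := by rw [hα, hβ]; ring
  have hu : 0 ≤ ‖A + b‖ := norm_nonneg _
  have hv : 0 ≤ ‖A - b‖ := norm_nonneg _
  have hu' : 0 ≤ ‖A + t • b‖ := norm_nonneg _
  have hv' : 0 ≤ ‖A - t • b‖ := norm_nonneg _
  have s1 : ‖A + t • b‖ ^ 2 ≤ (α * ‖A + b‖ + β * ‖A - b‖) ^ 2 := by
    have := pow_le_pow_left₀ hu' n1 2
    exact this
  have s2 : ‖A - t • b‖ ^ 2 ≤ (β * ‖A + b‖ + α * ‖A - b‖) ^ 2 := by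
    have := pow_le_pow_left₀ hv' n2 2
    exact this
  have hq : (α + β) ^ 2 = 1 := by rw [hαβ]; norm_num
  nlinarith [s1, s2, hq,
    mul_nonneg (mul_nonneg hα0 hβ0) (sq_nonneg (‖A + b‖ - ‖A - b‖))]

/-- reindexing a sum over sign patterns by the flip at one coordinate -/
lemma sum_flip_eq (n₀ : Fin N) (g : (Fin N → Bool) → ℝ) :
    ∑ ε : Fin N → Bool, g (Function.update ε n₀ (!(ε n₀))) = ∑ ε : Fin N → Bool, g ε := by
  classical
  have hinv : Function.Involutive
      (fun ε : Fin N → Bool => Function.update ε n₀ (!(ε n₀))) := by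
    intro ε
    funext n
    by_cases h : n = n₀
    · subst h
      simp
    · simp [Function.update_of_ne h]
  rw [← Equiv.sum_comp hinv.toPerm g]
  refine Finset.sum_congr rfl fun ε _ => ?_
  congr 1

lemma radAvg_update_le (a : Fin N → ℝ) (x : Fin N → X) (n₀ : Fin N) {t : ℝ} (ht : |t| ≤ 1) :
    radAvg (fun n => Function.update a n₀ t n • x n)
      ≤ radAvg (fun n => Function.update a n₀ 1 n • x n) := by
  classical
  rw [radAvg_eq, radAvg_eq]
  have h2N : (0:ℝ) < 2 ^ N := by positivity
  rw [div_le_div_iff_of_pos_right h2N]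
  set A : (Fin N → Bool) → X :=
    fun ε => ∑ n ∈ Finset.univ.erase n₀, sg (ε n) • (a n • x n) with hA
  set b : (Fin N → Bool) → X := fun ε => sg (ε n₀) • x n₀ with hb
  have hdec : ∀ (u : ℝ) (ε : Fin N → Bool),
      (∑ n, sg (ε n) • (Function.update a n₀ u n • x n)) = A ε + u • b ε := by
    intro u ε
    rw [← Finset.sum_erase_add _ _ (Finset.mem_univ n₀)]
    congr 1
    · refine Finset.sum_congr rfl fun n hn => ?_
      rw [Function.update_of_ne (Finset.ne_of_mem_erase hn)]
    · rw [Function.update_self]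
      show sg (ε n₀) • (u • x n₀) = u • (sg (ε n₀) • x n₀)
      rw [smul_comm]
  have hflip : ∀ (u : ℝ) (ε : Fin N → Bool),
      (∑ n, sg (Function.update ε n₀ (!(ε n₀)) n) •
        (Function.update a n₀ u n • x n)) = A ε - u • b ε := by
    intro u ε
    rw [hdec u]
    have hAe : A (Function.update ε n₀ (!(ε n₀))) = A ε := by
      rw [hA]
      refine Finset.sum_congr rfl fun n hn => ?_
      rw [Function.update_of_ne (Finset.ne_of_mem_erase hn)]
    have hbe : b (Function.update ε n₀ (!(ε n₀))) = -(b ε) := by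
      show sg ((Function.update ε n₀ (!(ε n₀))) n₀) • x n₀ = -(sg (ε n₀) • x n₀)
      rw [Function.update_self]
      cases ε n₀ <;> simp [sg]
    rw [hAe, hbe, smul_neg, sub_eq_add_neg]
  have key : ∀ u : ℝ, |u| ≤ 1 →
      (2:ℝ) * ∑ ε : Fin N → Bool, ‖∑ n, sg (ε n) • (Function.update a n₀ u n • x n)‖ ^ 2
      = ∑ ε : Fin N → Bool, (‖A ε + u • b ε‖ ^ 2 + ‖A ε - u • b ε‖ ^ 2) := by
    intro u _
    rw [two_mul]
    have := sum_flip_eq n₀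
      (fun ε => ‖∑ n, sg (ε n) • (Function.update a n₀ u n • x n)‖ ^ 2)
    rw [Finset.sum_add_distrib]
    congr 1
    · exact Finset.sum_congr rfl fun ε _ => by rw [hdec u]
    · rw [← this]
      exact Finset.sum_congr rfl fun ε _ => by rw [hflip u]
  have h2 : (2:ℝ) * ∑ ε : Fin N → Bool,
        ‖∑ n, sg (ε n) • (Function.update a n₀ t n • x n)‖ ^ 2
      ≤ (2:ℝ) * ∑ ε : Fin N → Bool,
        ‖∑ n, sg (ε n) • (Function.update a n₀ 1 n • x n)‖ ^ 2 := by
    rw [key t ht, key 1 (by norm_num)]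
    refine Finset.sum_le_sum fun ε _ => ?_
    have := norm_combo_sq (A := A ε) (b := b ε) ht
    simpa using this
  linarith

lemma radAvg_one_smul (x : Fin N → X) : radAvg (fun n => (1:ℝ) • x n) = radAvg x := by
  congr 1
  funext n
  rw [one_smul]

lemma radAvg_contraction (a : Fin N → ℝ) (x : Fin N → X) (ha : ∀ n, |a n| ≤ 1) :
    radAvg (fun n => a n • x n) ≤ radAvg x := by
  classical
  have main : ∀ T : Finset (Fin N), ∀ b : Fin N → ℝ, (∀ n, |b n| ≤ 1) →
      (∀ n ∉ T, b n = 1) → radAvg (fun n => b n • x n) ≤ radAvg x := by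
    intro T
    induction T using Finset.induction_on with
    | empty =>
      intro b hb h1
      have hball : ∀ n, b n = 1 := fun n => h1 n (Finset.notMem_empty n)
      have : radAvg (fun n => b n • x n) = radAvg x := by
        rw [← radAvg_one_smul x]
        congr 1
        funext n
        rw [hball n]
      rw [this]
    | @insert n₀ T hn₀ ih =>
      intro b hb h1
      have hupd : Function.update (Function.update b n₀ 1) n₀ (b n₀) = b := by
        rw [Function.update_idem, Function.update_eq_self]
      have step := radAvg_update_le (Function.update b n₀ 1) x n₀ (hb n₀)
      rw [hupd, Function.update_idem] at step
      refine le_trans ?_ (le_trans (ih (Function.update b n₀ 1) ?_ ?_) le_rfl)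
      · calc radAvg (fun n => b n • x n)
            ≤ radAvg (fun n => Function.update b n₀ 1 n • x n) := step
          _ ≤ _ := le_rfl
      · intro n
        by_cases h : n = n₀
        · subst h; rw [Function.update_self]; norm_num
        · rw [Function.update_of_ne h]; exact hb n
      · intro n hn
        by_cases h : n = n₀
        · subst h; rw [Function.update_self]
        · rw [Function.update_of_ne h]
          exact h1 n (by simp [h, hn])
  exact main Finset.univ a ha (fun n hn => absurd (Finset.mem_univ n) hn)

lemma radAvg_contraction_of_le (a : Fin N → ℝ) (x : Fin N → X) {M : ℝ} (hM : 0 ≤ M)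
    (ha : ∀ n, |a n| ≤ M) :
    radAvg (fun n => a n • x n) ≤ M ^ 2 * radAvg x := by
  rcases eq_or_lt_of_le hM with h | h
  · have hz : ∀ n, a n = 0 := fun n => abs_eq_zero.mp
      (le_antisymm (by rw [h]; exact ha n) (abs_nonneg _))
    have : radAvg (fun n => a n • x n) = radAvg (fun n => (0:ℝ) • x n) := by
      congr 1; funext n; rw [hz n]
    rw [this, radAvg_smul, ← h]
  · have key : radAvg (fun n => a n • x n) = radAvg (fun n => (a n / M) • (M • x n)) := by
      congr 1
      funext n
      rw [smul_smul, div_mul_cancel₀ _ (ne_of_gt h)]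
    rw [key]
    calc radAvg (fun n => (a n / M) • (M • x n)) ≤ radAvg (fun n => M • x n) := by
          refine radAvg_contraction _ _ fun n => ?_
          rw [abs_div, abs_of_pos h, div_le_one h]
          exact ha n
      _ = M ^ 2 * radAvg x := radAvg_smul M x

lemma radAvg_zero : radAvg (fun _ : Fin N => (0 : X)) = 0 := by
  simp [radAvg_eq]

lemma sqrt_radAvg_smul {c : ℝ} (hc : 0 ≤ c) (x : Fin N → X) :
    Real.sqrt (radAvg (fun n => c • x n)) = c * Real.sqrt (radAvg x) := by
  rw [radAvg_smul, Real.sqrt_mul (sq_nonneg c), Real.sqrt_sq hc]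

lemma sqrt_radAvg_add (x y : Fin N → X) :
    Real.sqrt (radAvg (fun n => x n + y n))
      ≤ Real.sqrt (radAvg x) + Real.sqrt (radAvg y) := by
  classical
  set u : (Fin N → Bool) → ℝ := fun ε => ‖∑ n, sg (ε n) • x n‖ with hu
  set v : (Fin N → Bool) → ℝ := fun ε => ‖∑ n, sg (ε n) • y n‖ with hv
  have hu0 : ∀ ε, 0 ≤ u ε := fun ε => norm_nonneg _
  have hv0 : ∀ ε, 0 ≤ v ε := fun ε => norm_nonneg _
  have hnum : (∑ ε : Fin N → Bool, ‖∑ n, sg (ε n) • (x n + y n)‖ ^ 2)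
      ≤ (Real.sqrt (∑ ε : Fin N → Bool, u ε ^ 2)
          + Real.sqrt (∑ ε : Fin N → Bool, v ε ^ 2)) ^ 2 := by
    have hcs : (∑ ε : Fin N → Bool, u ε * v ε)
        ≤ Real.sqrt (∑ ε : Fin N → Bool, u ε ^ 2)
          * Real.sqrt (∑ ε : Fin N → Bool, v ε ^ 2) := by
      rw [← Real.sqrt_mul (Finset.sum_nonneg fun ε _ => sq_nonneg _)]
      exact Real.le_sqrt_of_sq_le (Finset.sum_mul_sq_le_sq_mul_sq _ _ _)
    have hpt : ∀ ε : Fin N → Bool, ‖∑ n, sg (ε n) • (x n + y n)‖ ^ 2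
        ≤ (u ε + v ε) ^ 2 := by
      intro ε
      have hsplit : (∑ n, sg (ε n) • (x n + y n))
          = (∑ n, sg (ε n) • x n) + ∑ n, sg (ε n) • y n := by
        rw [← Finset.sum_add_distrib]
        exact Finset.sum_congr rfl fun n _ => smul_add _ _ _
      have : ‖∑ n, sg (ε n) • (x n + y n)‖ ≤ u ε + v ε := by
        rw [hsplit]; exact norm_add_le _ _
      exact pow_le_pow_left₀ (norm_nonneg _) this 2
    refine le_trans (Finset.sum_le_sum fun ε _ => hpt ε) ?_
    have hexp : ∑ ε : Fin N → Bool, (u ε + v ε) ^ 2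
        = (∑ ε : Fin N → Bool, u ε ^ 2) + 2 * (∑ ε : Fin N → Bool, u ε * v ε)
          + ∑ ε : Fin N → Bool, v ε ^ 2 := by
      rw [Finset.mul_sum, ← Finset.sum_add_distrib, ← Finset.sum_add_distrib]
      exact Finset.sum_congr rfl fun ε _ => by ring
    rw [hexp, add_sq, Real.sq_sqrt (Finset.sum_nonneg fun ε _ => sq_nonneg _),
      Real.sq_sqrt (Finset.sum_nonneg fun ε _ => sq_nonneg _)]
    nlinarith [hcs]
  have h2N : (0:ℝ) < 2 ^ N := by positivity
  rw [radAvg_eq, radAvg_eq, radAvg_eq, Real.sqrt_div (Finset.sum_nonneg fun ε _ => sq_nonneg _),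
    Real.sqrt_div (Finset.sum_nonneg fun ε _ => sq_nonneg _),
    Real.sqrt_div (Finset.sum_nonneg fun ε _ => sq_nonneg _)]
  rw [← add_div, div_le_div_iff_of_pos_right (Real.sqrt_pos.mpr h2N)]
  calc Real.sqrt (∑ ε : Fin N → Bool, ‖∑ n, sg (ε n) • (x n + y n)‖ ^ 2)
      ≤ Real.sqrt ((Real.sqrt (∑ ε : Fin N → Bool, u ε ^ 2)
          + Real.sqrt (∑ ε : Fin N → Bool, v ε ^ 2)) ^ 2) := Real.sqrt_le_sqrt hnum
    _ = _ := Real.sqrt_sq (by positivity)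

lemma sqrt_radAvg_sum_le {ι : Type*} [DecidableEq ι] (T : Finset ι) (y : ι → Fin N → X) :
    Real.sqrt (radAvg (fun n => ∑ i ∈ T, y i n)) ≤ ∑ i ∈ T, Real.sqrt (radAvg (y i)) := by
  induction T using Finset.induction_on with
  | empty => simp [radAvg_zero]
  | @insert i T hi ih =>
    have h1 : radAvg (fun n => ∑ j ∈ insert i T, y j n)
        = radAvg (fun n => y i n + ∑ j ∈ T, y j n) := by
      congr 1; funext n; rw [Finset.sum_insert hi]
    rw [h1, Finset.sum_insert hi]
    exact le_trans (sqrt_radAvg_add _ _) (by gcongr)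

/-- restriction of a vector to a finite index set -/
def sel (J : Finset (Fin N)) (x : Fin N → X) : Fin N → X := fun n => if n ∈ J then x n else 0

lemma radAvg_sel_le (J : Finset (Fin N)) (x : Fin N → X) :
    radAvg (sel J x) ≤ radAvg x := by
  have : radAvg (sel J x) = radAvg (fun n => (if n ∈ J then (1:ℝ) else 0) • x n) := by
    congr 1; funext n; show (if n ∈ J then x n else 0) = _; split <;> simp
  rw [this]
  refine radAvg_contraction _ _ fun n => ?_
  split <;> norm_num

lemma radAvg_sel_mono {I J : Finset (Fin N)} (hIJ : I ⊆ J) (x : Fin N → X) :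
    radAvg (sel I x) ≤ radAvg (sel J x) := by
  have : sel I x = sel I (sel J x) := by
    funext n
    show (if n ∈ I then x n else 0) = (if n ∈ I then (if n ∈ J then x n else 0) else 0)
    by_cases h : n ∈ I
    · simp [h, hIJ h]
    · simp [h]
  rw [this]
  exact radAvg_sel_le I (sel J x)

lemma radAvg_union_le {p C : ℝ} (hp₁ : 1 ≤ p) (hp₂ : p ≤ 2) (hC : 0 ≤ C)
    (hX : ∀ (k : ℕ) (w : Fin k → X), Real.sqrt (radAvg w) ≤ C * (∑ j, ‖w j‖ ^ p) ^ (1/p))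
    {N k : ℕ} (hk : 0 < k) (x : Fin N → X) (J : Fin k → Finset (Fin N)) :
    radAvg (sel (Finset.univ.sup J) x) ^ (p/2)
      ≤ C ^ p * ∑ j, radAvg (sel (J j) x) ^ (p/2) := by
  classical
  have hp0 : (0:ℝ) < p := lt_of_lt_of_le zero_lt_one hp₁
  set K := Finset.univ.sup J with hK
  set I : Fin k → Finset (Fin N) := fun j => J j \ (Finset.Iio j).sup J with hI
  set pc : Fin N → Fin k := fun n =>
    if h : ((Finset.univ.filter (fun j => n ∈ J j)).Nonempty)
    then (Finset.univ.filter (fun j => n ∈ J j)).min' h else ⟨0, hk⟩ with hpc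
  have hIJ : ∀ j, I j ⊆ J j := fun j => Finset.sdiff_subset
  have hJK : ∀ j, J j ⊆ K := fun j => Finset.le_sup (Finset.mem_univ j)
  have hpc1 : ∀ n ∈ K, n ∈ I (pc n) := by
    intro n hn
    rw [hK, Finset.mem_sup] at hn
    obtain ⟨j, -, hj⟩ := hn
    have hne : ((Finset.univ.filter (fun j => n ∈ J j)).Nonempty) :=
      ⟨j, Finset.mem_filter.mpr ⟨Finset.mem_univ j, hj⟩⟩
    have hmin := Finset.min'_mem _ hne
    rw [Finset.mem_filter] at hmin
    have hpcn : pc n = (Finset.univ.filter (fun j => n ∈ J j)).min' hne := by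
      rw [hpc]; simp only [dif_pos hne]
    rw [hpcn]
    rw [hI, Finset.mem_sdiff]
    refine ⟨hmin.2, ?_⟩
    intro hcon
    rw [Finset.mem_sup] at hcon
    obtain ⟨j', hj'lt, hj'⟩ := hcon
    rw [Finset.mem_Iio] at hj'lt
    have : (Finset.univ.filter (fun j => n ∈ J j)).min' hne ≤ j' :=
      Finset.min'_le _ _ (Finset.mem_filter.mpr ⟨Finset.mem_univ j', hj'⟩)
    exact absurd hj'lt (not_lt.mpr this)
  have hpc2 : ∀ n j, n ∈ I j → pc n = j := by
    intro n j hnj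
    rw [hI, Finset.mem_sdiff] at hnj
    have hne : ((Finset.univ.filter (fun j => n ∈ J j)).Nonempty) :=
      ⟨j, Finset.mem_filter.mpr ⟨Finset.mem_univ j, hnj.1⟩⟩
    have hpcn : pc n = (Finset.univ.filter (fun j => n ∈ J j)).min' hne := by
      rw [hpc]; simp only [dif_pos hne]
    have hle : pc n ≤ j := by
      rw [hpcn]
      exact Finset.min'_le _ _ (Finset.mem_filter.mpr ⟨Finset.mem_univ j, hnj.1⟩)
    rcases lt_or_eq_of_le hle with hlt | heq
    · exfalso
      have hmem := Finset.min'_mem _ hne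
      rw [← hpcn] at hmem
      rw [Finset.mem_filter] at hmem
      exact hnj.2 (Finset.mem_sup.mpr ⟨pc n, Finset.mem_Iio.mpr hlt, hmem.2⟩)
    · exact heq
  have hIK : ∀ j, I j ⊆ K := fun j => (hIJ j).trans (hJK j)
  -- the vectors w j ε
  set w : Fin k → (Fin N → Bool) → X := fun j ε => ∑ n, sg (ε n) • sel (I j) x n with hw
  -- step 1 : averaging over flips
  have h1 : radAvg (sel K x)
      = (∑ δ : Fin k → Bool, radAvg (fun n => sg (δ (pc n)) • sel K x n)) / 2 ^ k := by
    rw [Finset.sum_congr rfl (fun δ _ => radAvg_flip (fun n => δ (pc n)) (sel K x))]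
    rw [Finset.sum_const, Finset.card_univ]
    have : Fintype.card (Fin k → Bool) = 2 ^ k := by
      simp [Fintype.card_fun]
    rw [this, nsmul_eq_mul]
    field_simp
    norm_num
  -- step 2 : rearrangement
  have h2 : ∀ (δ : Fin k → Bool) (ε : Fin N → Bool),
      (∑ j, sg (δ j) • w j ε) = ∑ n, sg (ε n) • (sg (δ (pc n)) • sel K x n) := by
    intro δ ε
    rw [hw]
    simp only []
    rw [show (∑ j, sg (δ j) • ∑ n, sg (ε n) • sel (I j) x n)
        = ∑ j, ∑ n, sg (δ j) • (sg (ε n) • sel (I j) x n) from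
      Finset.sum_congr rfl fun j _ => Finset.smul_sum]
    rw [Finset.sum_comm]
    refine Finset.sum_congr rfl fun n _ => ?_
    by_cases hn : n ∈ K
    · have hnI : n ∈ I (pc n) := hpc1 n hn
      rw [Finset.sum_eq_single (pc n)]
      · have e1 : sel (I (pc n)) x n = x n := by
          show (if n ∈ I (pc n) then x n else 0) = x n
          rw [if_pos hnI]
        have e2 : sel K x n = x n := by
          show (if n ∈ K then x n else 0) = x n
          rw [if_pos hn]
        rw [e1, e2, smul_comm]
      · intro j _ hj
        have : n ∉ I j := fun hcon => hj (hpc2 n j hcon).symm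
        have : sel (I j) x n = 0 := by
          show (if n ∈ I j then x n else 0) = 0
          rw [if_neg this]
        rw [this, smul_zero, smul_zero]
      · intro h; exact absurd (Finset.mem_univ _) h
    · have e2 : sel K x n = 0 := by
        show (if n ∈ K then x n else 0) = 0
        rw [if_neg hn]
      rw [e2, smul_zero, smul_zero]
      refine Finset.sum_eq_zero fun j _ => ?_
      have : sel (I j) x n = 0 := by
        show (if n ∈ I j then x n else 0) = 0
        rw [if_neg fun hcon => hn (hIK j hcon)]
      rw [this, smul_zero, smul_zero]
  -- step 3 : express as average of radAvg over ε
  have h4 : radAvg (sel K x) = (∑ ε : Fin N → Bool, radAvg (fun j => w j ε)) / 2 ^ N := by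
    rw [h1]
    have : ∀ δ : Fin k → Bool, radAvg (fun n => sg (δ (pc n)) • sel K x n)
        = (∑ ε : Fin N → Bool, ‖∑ j, sg (δ j) • w j ε‖ ^ 2) / 2 ^ N := by
      intro δ
      rw [radAvg_eq]
      congr 1
      exact Finset.sum_congr rfl fun ε _ => by rw [h2 δ ε]
    rw [Finset.sum_congr rfl fun δ _ => this δ]
    rw [← Finset.sum_div]
    rw [Finset.sum_comm]
    have : ∀ ε : Fin N → Bool, radAvg (fun j => w j ε)
        = (∑ δ : Fin k → Bool, ‖∑ j, sg (δ j) • w j ε‖ ^ 2) / 2 ^ k := fun ε => radAvg_eq _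
    rw [Finset.sum_congr rfl fun ε _ => this ε, ← Finset.sum_div]
    rw [div_div, div_div, mul_comm ((2:ℝ)^N) _]
  -- step 4 : type inequality pointwise in ε
  have h5 : ∀ ε : Fin N → Bool, radAvg (fun j => w j ε)
      ≤ C ^ 2 * (∑ j, ‖w j ε‖ ^ p) ^ (2/p) := by
    intro ε
    have hS : (0:ℝ) ≤ ∑ j, ‖w j ε‖ ^ p :=
      Finset.sum_nonneg fun j _ => Real.rpow_nonneg (norm_nonneg _) p
    have h := hX k (fun j => w j ε)
    have hsq : radAvg (fun j => w j ε)
        ≤ (C * (∑ j, ‖w j ε‖ ^ p) ^ (1/p)) ^ 2 := by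
      have h0 : 0 ≤ radAvg (fun j => w j ε) := radAvg_nonneg _
      nlinarith [Real.sq_sqrt h0, Real.sqrt_nonneg (radAvg (fun j => w j ε)),
        mul_nonneg hC (Real.rpow_nonneg hS (1/p))]
    refine hsq.trans (le_of_eq ?_)
    rw [mul_pow]
    congr 1
    rw [← Real.rpow_natCast ((∑ j, ‖w j ε‖ ^ p) ^ (1/p)) 2, ← Real.rpow_mul hS]
    congr 1
    push_cast
    ring
  -- step 5 : Minkowski in l^{2/p}
  have h6 : (∑ ε : Fin N → Bool, (∑ j, ‖w j ε‖ ^ p) ^ (2/p))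
      ≤ (∑ j, (∑ ε : Fin N → Bool, ‖w j ε‖ ^ 2) ^ (p/2)) ^ (2/p) := by
    set q : ℝ≥0∞ := ENNReal.ofReal (2/p) with hq
    have hq1 : (1:ℝ) ≤ 2/p := by
      rw [le_div_iff₀ hp0]; linarith
    have hq0 : (0:ℝ) < 2/p := by positivity
    haveI : Fact (1 ≤ q) := ⟨by
      rw [hq, ← ENNReal.ofReal_one]
      exact ENNReal.ofReal_le_ofReal hq1⟩
    have hqr : q.toReal = 2/p := by
      rw [hq, ENNReal.toReal_ofReal (le_of_lt hq0)]
    set u : Fin k → PiLp q (fun _ : (Fin N → Bool) => ℝ) :=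
      fun j => (WithLp.equiv q _).symm (fun ε => ‖w j ε‖ ^ p) with hu
    have happly : ∀ (j : Fin k) (ε : Fin N → Bool), u j ε = ‖w j ε‖ ^ p := fun j ε => rfl
    have hsum_apply : ∀ ε : Fin N → Bool, (∑ j, u j) ε = ∑ j, ‖w j ε‖ ^ p := by
      intro ε
      rw [show ((∑ j, u j) ε) = ∑ j, u j ε from by rw [WithLp.ofLp_sum, Finset.sum_apply]]
      exact Finset.sum_congr rfl fun j _ => happly j ε
    have hLHS : ‖∑ j, u j‖ = (∑ ε : Fin N → Bool, (∑ j, ‖w j ε‖ ^ p) ^ (2/p)) ^ (p/2) := by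
      rw [PiLp.norm_eq_sum (by rw [hqr]; exact hq0)]
      rw [hqr]
      rw [show (1/(2/p)) = p/2 from one_div_div _ _]
      congr 1
      refine Finset.sum_congr rfl fun ε _ => ?_
      rw [hsum_apply ε, Real.norm_eq_abs, abs_of_nonneg
        (Finset.sum_nonneg fun j _ => Real.rpow_nonneg (norm_nonneg _) p)]
    have hRHS : ∀ j, ‖u j‖ = (∑ ε : Fin N → Bool, ‖w j ε‖ ^ 2) ^ (p/2) := by
      intro j
      rw [PiLp.norm_eq_sum (by rw [hqr]; exact hq0), hqr,
        show (1/(2/p)) = p/2 from one_div_div _ _]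
      congr 1
      refine Finset.sum_congr rfl fun ε _ => ?_
      rw [happly, Real.norm_eq_abs, abs_of_nonneg (Real.rpow_nonneg (norm_nonneg _) p),
        ← Real.rpow_mul (norm_nonneg _),
        show p * (2/p) = ((2:ℕ):ℝ) by push_cast; field_simp, Real.rpow_natCast]
    have htri : ‖∑ j, u j‖ ≤ ∑ j, ‖u j‖ := norm_sum_le _ _
    rw [hLHS] at htri
    rw [Finset.sum_congr rfl fun j _ => hRHS j] at htri
    have hA : (0:ℝ) ≤ ∑ ε : Fin N → Bool, (∑ j, ‖w j ε‖ ^ p) ^ (2/p) :=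
      Finset.sum_nonneg fun ε _ => Real.rpow_nonneg
        (Finset.sum_nonneg fun j _ => Real.rpow_nonneg (norm_nonneg _) p) _
    calc (∑ ε : Fin N → Bool, (∑ j, ‖w j ε‖ ^ p) ^ (2/p))
        = ((∑ ε : Fin N → Bool, (∑ j, ‖w j ε‖ ^ p) ^ (2/p)) ^ (p/2)) ^ (2/p) := by
          rw [← Real.rpow_mul hA]
          rw [show (p/2) * (2/p) = 1 by field_simp]
          rw [Real.rpow_one]
      _ ≤ _ := by
          refine Real.rpow_le_rpow (Real.rpow_nonneg hA _) htri (by positivity)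
  -- assemble
  have h2N : (0:ℝ) < 2 ^ N := by positivity
  have hfin : radAvg (sel K x) ≤ C ^ 2 * (∑ j, radAvg (sel (I j) x) ^ (p/2)) ^ (2/p) := by
    rw [h4]
    have step1 : (∑ ε : Fin N → Bool, radAvg (fun j => w j ε)) / 2 ^ N
        ≤ (C ^ 2 * ∑ ε : Fin N → Bool, (∑ j, ‖w j ε‖ ^ p) ^ (2/p)) / 2 ^ N := by
      rw [div_le_div_iff_of_pos_right h2N]
      rw [Finset.mul_sum]
      exact Finset.sum_le_sum fun ε _ => h5 ε
    refine step1.trans ?_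
    have hsum2 : ∀ j, (∑ ε : Fin N → Bool, ‖w j ε‖ ^ 2) = 2 ^ N * radAvg (sel (I j) x) := by
      intro j
      rw [radAvg_eq]
      field_simp
      rfl
    have : (∑ j, (∑ ε : Fin N → Bool, ‖w j ε‖ ^ 2) ^ (p/2)) ^ (2/p)
        = 2 ^ N * (∑ j, radAvg (sel (I j) x) ^ (p/2)) ^ (2/p) := by
      rw [Finset.sum_congr rfl fun j _ => by rw [hsum2 j]]
      rw [Finset.sum_congr rfl fun j _ =>
        Real.mul_rpow (le_of_lt h2N) (radAvg_nonneg (sel (I j) x))]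
      rw [← Finset.mul_sum]
      rw [Real.mul_rpow (Real.rpow_nonneg (le_of_lt h2N) _)
        (Finset.sum_nonneg fun j _ => Real.rpow_nonneg (radAvg_nonneg _) _)]
      rw [← Real.rpow_mul (le_of_lt h2N), show (p/2) * (2/p) = 1 by field_simp,
        Real.rpow_one]
    calc (C ^ 2 * ∑ ε : Fin N → Bool, (∑ j, ‖w j ε‖ ^ p) ^ (2/p)) / 2 ^ N
        ≤ (C ^ 2 * ((∑ j, (∑ ε : Fin N → Bool, ‖w j ε‖ ^ 2) ^ (p/2)) ^ (2/p))) / 2 ^ N := by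
          rw [div_le_div_iff_of_pos_right h2N]
          exact mul_le_mul_of_nonneg_left h6 (sq_nonneg C)
      _ = C ^ 2 * (∑ j, radAvg (sel (I j) x) ^ (p/2)) ^ (2/p) := by
          rw [this]
          field_simp
  -- raise to the power p/2
  have hradK : (0:ℝ) ≤ radAvg (sel K x) := radAvg_nonneg _
  have hT : (0:ℝ) ≤ (∑ j, radAvg (sel (I j) x) ^ (p/2)) :=
    Finset.sum_nonneg fun j _ => Real.rpow_nonneg (radAvg_nonneg _) _
  have hstep : radAvg (sel K x) ^ (p/2) ≤ (C ^ 2 * (∑ j, radAvg (sel (I j) x) ^ (p/2)) ^ (2/p)) ^ (p/2) :=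
    Real.rpow_le_rpow hradK hfin (by positivity)
  refine hstep.trans ?_
  rw [Real.mul_rpow (sq_nonneg C) (Real.rpow_nonneg hT _)]
  rw [← Real.rpow_mul hT, show (2/p) * (p/2) = 1 by field_simp, Real.rpow_one]
  have hCsq : (C ^ 2 : ℝ) ^ (p/2) = C ^ p := by
    rw [← Real.rpow_natCast C 2, ← Real.rpow_mul hC]
    congr 1
    push_cast
    ring
  rw [hCsq]
  refine mul_le_mul_of_nonneg_left ?_ (Real.rpow_nonneg hC _)
  exact Finset.sum_le_sum fun j _ =>
    Real.rpow_le_rpow (radAvg_nonneg _) (radAvg_sel_mono (hIJ j) x) (by positivity)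

lemma coreA {p C : ℝ} (hp₁ : 1 ≤ p) (hp₂ : p ≤ 2) (hC : 0 ≤ C)
    (hX : ∀ (k : ℕ) (w : Fin k → X), Real.sqrt (radAvg w) ≤ C * (∑ j, ‖w j‖ ^ p) ^ (1/p))
    {N : ℕ} (x : Fin N → X) {ι : Type*} [Fintype ι] [DecidableEq ι]
    (J : ι → Finset (Fin N)) (β : ι → ℝ) (hβ : ∀ i, 0 ≤ β i)
    {m : ℝ} (hm : 0 < m) (n₀ : Fin N)
    (hcov : ∀ n : Fin N, ∑ i, (if n ∈ J i then β i else 0) = m) :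
    m * radAvg x ^ (p/2) ≤ 8 * C ^ p * ∑ i, β i * radAvg (sel (J i) x) ^ (p/2) := by
  classical
  have hp0 : (0:ℝ) < p := lt_of_lt_of_le zero_lt_one hp₁
  set W := ∑ i, β i with hWdef
  have hmW : m ≤ W := by
    rw [← hcov n₀, hWdef]
    refine Finset.sum_le_sum fun i _ => ?_
    split
    · exact le_rfl
    · exact hβ i
  have hW0 : (0:ℝ) < W := lt_of_lt_of_le hm hmW
  set P : ι → ℝ := fun i => β i / W with hPdef
  have hP0 : ∀ i, 0 ≤ P i := fun i => div_nonneg (hβ i) (le_of_lt hW0)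
  have hPsum : ∑ i, P i = 1 := by
    rw [hPdef, ← Finset.sum_div, ← hWdef, div_self (ne_of_gt hW0)]
  set k := ⌈W/m⌉₊ with hkdef
  have hk0 : 0 < k := Nat.ceil_pos.mpr (div_pos hW0 hm)
  have hk1 : W/m ≤ (k:ℝ) := Nat.le_ceil _
  have hk2 : (k:ℝ) ≤ W/m + 1 := le_of_lt (Nat.ceil_lt_add_one (by positivity))
  set Q : (Fin k → ι) → ℝ := fun θ => ∏ j, P (θ j) with hQdef
  have hQ0 : ∀ θ, 0 ≤ Q θ := fun θ => Finset.prod_nonneg fun j _ => hP0 _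
  have hQsum : ∑ θ : Fin k → ι, Q θ = 1 := by
    rw [hQdef, ← Fintype.prod_sum (fun (_ : Fin k) (i : ι) => P i)]
    rw [Finset.prod_congr rfl fun j _ => hPsum]
    exact Finset.prod_const_one
  set KK : (Fin k → ι) → Finset (Fin N) := fun θ => Finset.univ.sup (fun j => J (θ j)) with hKK
  have hout : ∀ n : Fin N,
      ∑ θ : Fin k → ι, (if n ∈ KK θ then 0 else Q θ) = (1 - m/W) ^ k := by
    intro n
    have hfact : ∀ θ : Fin k → ι, (if n ∈ KK θ then 0 else Q θ)
        = ∏ j, (if n ∈ J (θ j) then 0 else P (θ j)) := by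
      intro θ
      by_cases h : n ∈ KK θ
      · rw [if_pos h]
        rw [hKK, Finset.mem_sup] at h
        obtain ⟨j, -, hj⟩ := h
        symm
        exact Finset.prod_eq_zero (Finset.mem_univ j) (by rw [if_pos hj])
      · rw [if_neg h]
        have hnot : ∀ j : Fin k, n ∉ J (θ j) := by
          intro j hcon
          exact h (Finset.mem_sup.mpr ⟨j, Finset.mem_univ j, hcon⟩)
        exact (Finset.prod_congr rfl fun j _ => by rw [if_neg (hnot j)]).symm
    rw [Finset.sum_congr rfl fun θ _ => hfact θ]
    rw [← Fintype.prod_sum (fun (_ : Fin k) (i : ι) => if n ∈ J i then 0 else P i)]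
    have hone : (∑ i, if n ∈ J i then 0 else P i) = 1 - m/W := by
      have e1 : (∑ i, if n ∈ J i then 0 else P i)
          = (∑ i, P i) - ∑ i, (if n ∈ J i then P i else 0) := by
        rw [← Finset.sum_sub_distrib]
        refine Finset.sum_congr rfl fun i _ => ?_
        split
        · rw [sub_self]
        · rw [sub_zero]
      have e2 : (∑ i, (if n ∈ J i then P i else 0))
          = (∑ i, (if n ∈ J i then β i else 0)) / W := by
        rw [Finset.sum_div]
        refine Finset.sum_congr rfl fun i _ => ?_
        split
        · rfl
        · rw [zero_div]
      rw [e1, e2, hcov n, hPsum]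
    rw [Finset.prod_congr rfl fun j _ => hone, Finset.prod_const, Finset.card_univ,
      Fintype.card_fin]
  have hu0 : (0:ℝ) < m/W := div_pos hm hW0
  have hu1 : m/W ≤ 1 := (div_le_one hW0).mpr hmW
  have hku : (1:ℝ) ≤ (k:ℝ) * (m/W) := by
    have h1 : (W/m) * (m/W) ≤ (k:ℝ) * (m/W) :=
      mul_le_mul_of_nonneg_right hk1 (le_of_lt hu0)
    have h2 : (W/m) * (m/W) = 1 := by field_simp
    linarith
  have hhalf : (1 - m/W) ^ k ≤ 1/2 := by
    have h1 : (1 - m/W) ≤ 1/(1 + m/W) := by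
      rw [le_div_iff₀ (by linarith)]
      nlinarith
    have h2 : (1 - m/W) ^ k ≤ (1/(1 + m/W)) ^ k :=
      pow_le_pow_left₀ (by linarith) h1 k
    have h3 : (1/(1 + m/W)) ^ k = 1/((1 + m/W) ^ k) := by
      rw [div_pow, one_pow]
    have h4 : (1:ℝ) + (k:ℝ) * (m/W) ≤ (1 + m/W) ^ k :=
      one_add_mul_le_pow (by linarith : (-2:ℝ) ≤ m/W) k
    have h5 : 1/((1 + m/W) ^ k) ≤ 1/(1 + (k:ℝ) * (m/W)) := by
      apply one_div_le_one_div_of_le (by linarith) h4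
    have h6 : 1/(1 + (k:ℝ) * (m/W)) ≤ 1/2 := by
      apply one_div_le_one_div_of_le (by norm_num) (by linarith)
    calc (1 - m/W) ^ k ≤ (1/(1 + m/W)) ^ k := h2
      _ = 1/((1 + m/W) ^ k) := h3
      _ ≤ 1/(1 + (k:ℝ) * (m/W)) := h5
      _ ≤ 1/2 := h6
  set η : Fin N → ℝ := fun n => ∑ θ : Fin k → ι, (if n ∈ KK θ then Q θ else 0) with hηdef
  have hη2 : ∀ n, 1/2 ≤ η n := by
    intro n
    have hsplit : η n + ∑ θ : Fin k → ι, (if n ∈ KK θ then 0 else Q θ) = 1 := by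
      rw [hηdef]
      simp only []
      rw [← Finset.sum_add_distrib]
      rw [show (∑ θ : Fin k → ι, ((if n ∈ KK θ then Q θ else 0) + if n ∈ KK θ then 0 else Q θ))
          = ∑ θ : Fin k → ι, Q θ from Finset.sum_congr rfl fun θ _ => by split <;> simp]
      exact hQsum
    rw [hout n] at hsplit
    linarith [hhalf]
  -- Jensen step
  have hrepr : ∀ n, (∑ θ : Fin k → ι, Q θ • sel (KK θ) x n) = η n • x n := by
    intro n
    have : η n • x n = (∑ θ : Fin k → ι, (if n ∈ KK θ then Q θ else 0)) • x n := rfl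
    rw [this, Finset.sum_smul]
    refine Finset.sum_congr rfl fun θ _ => ?_
    show Q θ • (if n ∈ KK θ then x n else 0) = (if n ∈ KK θ then Q θ else 0) • x n
    split
    · rfl
    · rw [smul_zero, zero_smul]
  have hJen : Real.sqrt (radAvg (fun n => η n • x n))
      ≤ ∑ θ : Fin k → ι, Q θ * Real.sqrt (radAvg (sel (KK θ) x)) := by
    have h0 : radAvg (fun n => η n • x n)
        = radAvg (fun n => ∑ θ : Fin k → ι, Q θ • sel (KK θ) x n) := by
      congr 1
      funext n
      rw [hrepr n]
    rw [h0]
    refine (sqrt_radAvg_sum_le Finset.univ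
      (fun θ => fun n => Q θ • sel (KK θ) x n)).trans ?_
    refine le_of_eq (Finset.sum_congr rfl fun θ _ => ?_)
    exact sqrt_radAvg_smul (hQ0 θ) (sel (KK θ) x)
  have hcontr : Real.sqrt (radAvg x) ≤ 2 * Real.sqrt (radAvg (fun n => η n • x n)) := by
    have hηpos : ∀ n, 0 < η n := fun n => lt_of_lt_of_le (by norm_num) (hη2 n)
    have hx : radAvg x = radAvg (fun n => (η n)⁻¹ • (η n • x n)) := by
      congr 1
      funext n
      rw [smul_smul, inv_mul_cancel₀ (ne_of_gt (hηpos n)), one_smul]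
    have hbound : radAvg (fun n => (η n)⁻¹ • (η n • x n))
        ≤ 2 ^ 2 * radAvg (fun n => η n • x n) := by
      refine radAvg_contraction_of_le _ _ (by norm_num) fun n => ?_
      rw [abs_of_pos (inv_pos.mpr (hηpos n))]
      have h1 : (2:ℝ)⁻¹ ≤ η n := by
        rw [show ((2:ℝ))⁻¹ = 1/2 by norm_num]
        exact hη2 n
      calc (η n)⁻¹ ≤ ((2:ℝ)⁻¹)⁻¹ := by
            apply inv_anti₀ (by norm_num) h1
        _ = 2 := by norm_num
    have : radAvg x ≤ 2 ^ 2 * radAvg (fun n => η n • x n) := hx ▸ hbound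
    calc Real.sqrt (radAvg x) ≤ Real.sqrt (2 ^ 2 * radAvg (fun n => η n • x n)) :=
          Real.sqrt_le_sqrt this
      _ = 2 * Real.sqrt (radAvg (fun n => η n • x n)) := by
          rw [Real.sqrt_mul (by norm_num : (0:ℝ) ≤ 2 ^ 2), Real.sqrt_sq (by norm_num : (0:ℝ) ≤ 2)]
  set g : (Fin k → ι) → ℝ := fun θ => Real.sqrt (radAvg (sel (KK θ) x)) with hgdef
  have hg0 : ∀ θ, 0 ≤ g θ := fun θ => Real.sqrt_nonneg _
  have hG2 : Real.sqrt (radAvg x) ≤ 2 * ∑ θ : Fin k → ι, Q θ * g θ :=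
    hcontr.trans (by linarith [hJen])
  -- Jensen for the power p
  have hJenp : (∑ θ : Fin k → ι, Q θ * g θ) ^ p ≤ ∑ θ : Fin k → ι, Q θ * g θ ^ p := by
    have hconv := convexOn_rpow hp₁
    have := hconv.map_sum_le (t := (Finset.univ : Finset (Fin k → ι)))
      (w := Q) (p := g) (fun θ _ => hQ0 θ) hQsum (fun θ _ => Set.mem_Ici.mpr (hg0 θ))
    simpa only [smul_eq_mul] using this
  have hGp : Real.sqrt (radAvg x) ^ p ≤ 2 ^ p * ∑ θ : Fin k → ι, Q θ * g θ ^ p := by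
    have hsum0 : 0 ≤ ∑ θ : Fin k → ι, Q θ * g θ :=
      Finset.sum_nonneg fun θ _ => mul_nonneg (hQ0 θ) (hg0 θ)
    have h1 : Real.sqrt (radAvg x) ^ p ≤ (2 * ∑ θ : Fin k → ι, Q θ * g θ) ^ p :=
      Real.rpow_le_rpow (Real.sqrt_nonneg _) hG2 (le_of_lt hp0)
    rw [Real.mul_rpow (by norm_num) hsum0] at h1
    refine h1.trans ?_
    exact mul_le_mul_of_nonneg_left hJenp (Real.rpow_nonneg (by norm_num) p)
  -- union bound via the type-p inequality
  have hsqrt_rpow : ∀ (a : ℝ), 0 ≤ a → Real.sqrt a ^ p = a ^ (p/2) := by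
    intro a ha
    rw [Real.sqrt_eq_rpow, ← Real.rpow_mul ha]
    congr 1
    ring
  have hUnion : ∀ θ : Fin k → ι, g θ ^ p ≤ C ^ p * ∑ j, radAvg (sel (J (θ j)) x) ^ (p/2) := by
    intro θ
    rw [hgdef]
    simp only []
    rw [hsqrt_rpow _ (radAvg_nonneg _)]
    exact radAvg_union_le hp₁ hp₂ hC hX hk0 x (fun j => J (θ j))
  have hmarg : ∀ j₀ : Fin k,
      (∑ θ : Fin k → ι, Q θ * radAvg (sel (J (θ j₀)) x) ^ (p/2))
        = ∑ i, P i * radAvg (sel (J i) x) ^ (p/2) := by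
    intro j₀
    set G : ι → ℝ := fun i => radAvg (sel (J i) x) ^ (p/2) with hGdef
    have key : ∀ θ : Fin k → ι,
        Q θ * G (θ j₀) = ∏ j, (if j = j₀ then P (θ j) * G (θ j) else P (θ j)) := by
      intro θ
      rw [← Finset.mul_prod_erase _ _ (Finset.mem_univ j₀), if_pos rfl]
      rw [Finset.prod_congr rfl (fun j hj => if_neg (Finset.ne_of_mem_erase hj))]
      rw [hQdef]
      simp only []
      rw [← Finset.mul_prod_erase _ (fun j => P (θ j)) (Finset.mem_univ j₀)]
      ring
    rw [Finset.sum_congr rfl fun θ _ => key θ]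
    rw [← Fintype.prod_sum (fun (j : Fin k) (i : ι) => if j = j₀ then P i * G i else P i)]
    rw [← Finset.mul_prod_erase _ _ (Finset.mem_univ j₀)]
    rw [show (∑ i, if j₀ = j₀ then P i * G i else P i) = ∑ i, P i * G i from
      Finset.sum_congr rfl fun i _ => if_pos rfl]
    rw [Finset.prod_congr rfl (fun j hj =>
      show (∑ i, if j = j₀ then P i * G i else P i) = 1 from by
        rw [Finset.sum_congr rfl fun i _ => if_neg (Finset.ne_of_mem_erase hj)]
        exact hPsum)]
    rw [Finset.prod_const_one, mul_one]
  have hρ0 : (0:ℝ) ≤ ∑ i, β i * radAvg (sel (J i) x) ^ (p/2) :=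
    Finset.sum_nonneg fun i _ => mul_nonneg (hβ i) (Real.rpow_nonneg (radAvg_nonneg _) _)
  have step1 : (∑ θ : Fin k → ι, Q θ * g θ ^ p)
      ≤ C ^ p * ((k:ℝ)/W) * ∑ i, β i * radAvg (sel (J i) x) ^ (p/2) := by
    have h1 : (∑ θ : Fin k → ι, Q θ * g θ ^ p)
        ≤ ∑ θ : Fin k → ι, Q θ * (C ^ p * ∑ j, radAvg (sel (J (θ j)) x) ^ (p/2)) :=
      Finset.sum_le_sum fun θ _ => mul_le_mul_of_nonneg_left (hUnion θ) (hQ0 θ)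
    refine h1.trans (le_of_eq ?_)
    rw [show (∑ θ : Fin k → ι, Q θ * (C ^ p * ∑ j, radAvg (sel (J (θ j)) x) ^ (p/2)))
        = C ^ p * ∑ θ : Fin k → ι, ∑ j, Q θ * radAvg (sel (J (θ j)) x) ^ (p/2) from by
      rw [Finset.mul_sum]
      refine Finset.sum_congr rfl fun θ _ => ?_
      rw [Finset.mul_sum, Finset.mul_sum, Finset.mul_sum]
      exact Finset.sum_congr rfl fun j _ => by ring]
    rw [Finset.sum_comm]
    rw [Finset.sum_congr rfl fun j _ => hmarg j]
    rw [Finset.sum_const, Finset.card_univ, Fintype.card_fin, nsmul_eq_mul]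
    rw [show (∑ i, P i * radAvg (sel (J i) x) ^ (p/2))
        = (∑ i, β i * radAvg (sel (J i) x) ^ (p/2)) / W from by
      rw [Finset.sum_div]
      refine Finset.sum_congr rfl fun i _ => ?_
      rw [hPdef]
      simp only []
      ring]
    field_simp
  have hfinal : m * radAvg x ^ (p/2)
      ≤ 2 ^ p * C ^ p * (m * (k:ℝ)/W) * ∑ i, β i * radAvg (sel (J i) x) ^ (p/2) := by
    have h0 : radAvg x ^ (p/2) = Real.sqrt (radAvg x) ^ p :=
      (hsqrt_rpow _ (radAvg_nonneg x)).symm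
    rw [h0]
    calc m * Real.sqrt (radAvg x) ^ p
        ≤ m * (2 ^ p * ∑ θ : Fin k → ι, Q θ * g θ ^ p) :=
          mul_le_mul_of_nonneg_left hGp (le_of_lt hm)
      _ ≤ m * (2 ^ p * (C ^ p * ((k:ℝ)/W) * ∑ i, β i * radAvg (sel (J i) x) ^ (p/2))) := by
          refine mul_le_mul_of_nonneg_left ?_ (le_of_lt hm)
          exact mul_le_mul_of_nonneg_left step1 (Real.rpow_nonneg (by norm_num) p)
      _ = 2 ^ p * C ^ p * (m * (k:ℝ)/W) * ∑ i, β i * radAvg (sel (J i) x) ^ (p/2) := by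
          ring
  refine hfinal.trans ?_
  have h2p : (2:ℝ) ^ p ≤ 4 := by
    have h := Real.rpow_le_rpow_of_exponent_le (by norm_num : (1:ℝ) ≤ 2) hp₂
    rw [show ((2:ℝ) ^ (2:ℝ)) = 4 from by
      rw [show ((2:ℝ)) = ((2:ℕ):ℝ) by norm_num, Real.rpow_natCast]
      norm_num] at h
    exact h
  have hmkW : m * (k:ℝ)/W ≤ 2 := by
    rw [div_le_iff₀ hW0]
    have h1 : m * (k:ℝ) ≤ m * (W/m + 1) := mul_le_mul_of_nonneg_left hk2 (le_of_lt hm)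
    have h2 : m * (W/m + 1) = W + m := by field_simp
    linarith
  have hmkW0 : (0:ℝ) ≤ m * (k:ℝ)/W := by positivity
  have h2p0 : (0:ℝ) ≤ (2:ℝ) ^ p := Real.rpow_nonneg (by norm_num) p
  have hCp0 : (0:ℝ) ≤ C ^ p := Real.rpow_nonneg hC p
  have hconst : (2:ℝ) ^ p * C ^ p * (m * (k:ℝ)/W) ≤ 8 * C ^ p := by
    have hstep := mul_le_mul (mul_le_mul_of_nonneg_right h2p hCp0) hmkW hmkW0 (by positivity)
    calc (2:ℝ) ^ p * C ^ p * (m * (k:ℝ)/W) ≤ 4 * C ^ p * 2 := hstep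
      _ = 8 * C ^ p := by ring
  exact mul_le_mul_of_nonneg_right hconst hρ0

lemma sqrt_rpow' {a q : ℝ} (ha : 0 ≤ a) : Real.sqrt a ^ q = a ^ (q/2) := by
  rw [Real.sqrt_eq_rpow, ← Real.rpow_mul ha]
  congr 1
  ring

end Rad


/-- `X` has (Rademacher) type `p`:
`(𝔼 ‖∑ rₙ xₙ‖²)^(1/2) ≤ C (∑ ‖xₙ‖^p)^(1/p)`. -/
def HasRademacherType (X : Type*) [NormedAddCommGroup X] [NormedSpace ℝ X] (p : ℝ) : Prop :=
  ∃ C : ℝ, 0 ≤ C ∧ ∀ (N : ℕ) (x : Fin N → X),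
    Real.sqrt (radAvg x) ≤ C * (∑ n, ‖x n‖ ^ p) ^ (1 / p)

/-- `X` has (Rademacher) cotype `q ∈ [2,∞]`:
`(∑ ‖xₙ‖^q)^(1/q) ≤ C (𝔼 ‖∑ rₙ xₙ‖²)^(1/2)` (with `max ‖xₙ‖` on the left if `q = ∞`). -/
def HasRademacherCotype (X : Type*) [NormedAddCommGroup X] [NormedSpace ℝ X] (q : ℝ≥0∞) : Prop :=
  ∃ C : ℝ, 0 ≤ C ∧ ∀ (N : ℕ) (x : Fin N → X),
    (if q = ∞ then ⨆ n, ‖x n‖ else (∑ n, ‖x n‖ ^ q.toReal) ^ (1 / q.toReal))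
      ≤ C * Real.sqrt (radAvg x)

/-- Lemma 3.5(1): if `X` has type `p ∈ (1,2]`, then for identically distributed
`f₁,…,f_N ∈ L^{p,∞}(S)` and `x₁,…,x_N ∈ X`,
`‖f₁‖_{L^{p,∞}} ‖∑ rₙ xₙ‖_{L²(Ω;X)} ≤ C ‖∑ rₙ fₙ xₙ‖_{L^p(S;L²(Ω;X))}`. -/
theorem statement4 {X : Type*} [NormedAddCommGroup X] [NormedSpace ℝ X] [CompleteSpace X]
    {S : Type*} [MeasurableSpace S] (μ : Measure S) [SigmaFinite μ]
    (p : ℝ) (hp₁ : 1 < p) (hp₂ : p ≤ 2) (hX : HasRademacherType X p) :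
    ∃ C : ℝ, 0 ≤ C ∧ ∀ (N : ℕ) (hN : 0 < N) (f : Fin N → S → ℝ) (x : Fin N → X),
      (∀ n, Measurable (f n)) →
      (∀ n, ∀ t > (0 : ℝ), μ {s | t < |f n s|} = μ {s | t < |f ⟨0, hN⟩ s|}) →
      (⨆ t ∈ Set.Ioi (0 : ℝ), ENNReal.ofReal t * μ {s | t < |f ⟨0, hN⟩ s|} ^ (1 / p)) < ∞ →
      (⨆ t ∈ Set.Ioi (0 : ℝ), ENNReal.ofReal t * μ {s | t < |f ⟨0, hN⟩ s|} ^ (1 / p)) *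
          ENNReal.ofReal (Real.sqrt (radAvg x)) ≤
        ENNReal.ofReal C *
          eLpNorm (fun s => Real.sqrt (radAvg fun n => f n s • x n)) (ENNReal.ofReal p) μ := by
  classical
  obtain ⟨CT, hCT0, hXt⟩ := hX
  have hp0 : (0:ℝ) < p := lt_trans zero_lt_one hp₁
  refine ⟨8 * (CT + 1), by positivity, ?_⟩
  intro N hN f x hmeas hid hfin
  set g : S → ℝ := fun s => Real.sqrt (radAvg fun n => f n s • x n) with hgdef
  have hg0 : ∀ s, 0 ≤ g s := fun s => Real.sqrt_nonneg _
  -- rewrite the eLpNorm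
  have hpne : (ENNReal.ofReal p) ≠ 0 := by
    simp [ENNReal.ofReal_eq_zero, not_le, hp0]
  have hptop : (ENNReal.ofReal p) ≠ ∞ := ENNReal.ofReal_ne_top
  have heLp : eLpNorm g (ENNReal.ofReal p) μ
      = (∫⁻ s, (‖g s‖₊ : ℝ≥0∞) ^ p ∂μ) ^ (1/p) := by
    simp only [eLpNorm_eq_lintegral_rpow_enorm_toReal hpne hptop, ENNReal.toReal_ofReal (le_of_lt hp0), enorm_eq_nnnorm]
  set Itg := ∫⁻ s, (‖g s‖₊ : ℝ≥0∞) ^ p ∂μ with hItg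
  -- reduce to a fixed level t
  rw [ENNReal.iSup_mul]
  refine iSup_le fun t => ?_
  rw [ENNReal.iSup_mul]
  refine iSup_le fun ht => ?_
  have ht0 : (0:ℝ) < t := ht
  -- the measure of the level set
  by_cases hmt0 : μ {s | t < |f ⟨0, hN⟩ s|} = 0
  · rw [hmt0, ENNReal.zero_rpow_of_pos (by positivity), mul_zero, zero_mul]
    exact zero_le
  have hterm : ENNReal.ofReal t * μ {s | t < |f ⟨0, hN⟩ s|} ^ (1/p)
      ≤ ⨆ t ∈ Set.Ioi (0 : ℝ), ENNReal.ofReal t * μ {s | t < |f ⟨0, hN⟩ s|} ^ (1 / p) :=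
    le_iSup₂ (f := fun (t : ℝ) (_ : t ∈ Set.Ioi (0:ℝ)) =>
      ENNReal.ofReal t * μ {s | t < |f ⟨0, hN⟩ s|} ^ (1 / p)) t ht
  have hmttop : μ {s | t < |f ⟨0, hN⟩ s|} ≠ ∞ := by
    intro hcon
    rw [hcon, ENNReal.top_rpow_of_pos (by positivity), ENNReal.mul_top
      (by simp [ENNReal.ofReal_eq_zero, not_le, ht0])] at hterm
    rw [top_le_iff.mp hterm] at hfin
    exact lt_irrefl _ hfin
  -- atoms
  set A : Fin N → Set S := fun n => {s | t < |f n s|} with hAdef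
  have hAmeas : ∀ n, MeasurableSet (A n) := by
    intro n
    have : A n = (fun s => |f n s|) ⁻¹' Set.Ioi t := rfl
    rw [this]
    exact ((hmeas n).abs) measurableSet_Ioi
  have hidA : ∀ n, μ (A n) = μ (A ⟨0, hN⟩) := fun n => hid n t ht0
  set B : (Fin N → Bool) → Set S :=
    fun v => ⋂ n, (if v n = true then A n else (A n)ᶜ) with hBdef
  have hBmeas : ∀ v, MeasurableSet (B v) := by
    intro v
    refine MeasurableSet.iInter fun n => ?_
    split
    · exact hAmeas n
    · exact (hAmeas n).compl
  have hBmem : ∀ v s, s ∈ B v ↔ ∀ n, (v n = true ↔ s ∈ A n) := by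
    intro v s
    rw [hBdef]
    simp only [Set.mem_iInter]
    constructor
    · intro h n
      have := h n
      by_cases hv : v n = true
      · rw [if_pos hv] at this
        exact ⟨fun _ => this, fun _ => hv⟩
      · rw [if_neg hv] at this
        exact ⟨fun h' => absurd h' hv, fun h' => absurd h' this⟩
    · intro h n
      by_cases hv : v n = true
      · rw [if_pos hv]
        exact (h n).mp hv
      · rw [if_neg hv]
        intro hcon
        exact hv ((h n).mpr hcon)
  have hdisj : Set.PairwiseDisjoint (↑(Finset.univ : Finset (Fin N → Bool))) B := by
    intro v _ v' _ hne
    refine Set.disjoint_left.mpr fun s hs hs' => ?_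
    refine hne (funext fun n => ?_)
    have h1 := (hBmem v s).mp hs n
    have h2 := (hBmem v' s).mp hs' n
    by_cases h : s ∈ A n
    · rw [h1.mpr h, h2.mpr h]
    · cases hv : v n
      · cases hv' : v' n
        · rfl
        · exact absurd (h2.mp hv') h
      · exact absurd (h1.mp hv) h
  have hcoverA : ∀ n, A n
      = ⋃ v ∈ Finset.univ.filter (fun v : Fin N → Bool => v n = true), B v := by
    intro n
    ext s
    constructor
    · intro hs
      set vs : Fin N → Bool := fun n' => decide (s ∈ A n') with hvs
      have hsB : s ∈ B vs := by
        rw [hBmem]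
        intro n'
        rw [hvs]
        simp only [decide_eq_true_eq]
      refine Set.mem_iUnion₂.mpr ⟨vs, ?_, hsB⟩
      rw [Finset.mem_filter]
      refine ⟨Finset.mem_univ _, ?_⟩
      rw [hvs]
      simp only [decide_eq_true_eq]
      exact hs
    · intro hs
      rw [Set.mem_iUnion₂] at hs
      obtain ⟨v, hv, hsB⟩ := hs
      rw [Finset.mem_filter] at hv
      exact ((hBmem v s).mp hsB n).mp hv.2
  have hmeasA : ∀ n, μ (A n)
      = ∑ v ∈ Finset.univ.filter (fun v : Fin N → Bool => v n = true), μ (B v) := by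
    intro n
    rw [hcoverA n]
    exact measure_biUnion_finset (hdisj.subset (by simp [Finset.coe_subset])) fun v _ => hBmeas v
  set J : (Fin N → Bool) → Finset (Fin N) :=
    fun v => Finset.univ.filter (fun n => v n = true) with hJdef
  have hBA : ∀ v n, n ∈ J v → B v ⊆ A n := by
    intro v n hn s hs
    rw [hJdef, Finset.mem_filter] at hn
    exact ((hBmem v s).mp hs n).mp hn.2
  have hBfin : ∀ v, (∃ n, n ∈ J v) → μ (B v) ≠ ∞ := by
    intro v ⟨n, hn⟩
    refine ne_top_of_le_ne_top ?_ (measure_mono (hBA v n hn))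
    rw [hidA n]
    exact hmttop
  set β : (Fin N → Bool) → ℝ := fun v => (μ (B v)).toReal with hβdef
  set m : ℝ := (μ (A ⟨0, hN⟩)).toReal with hmdef
  have hm0 : 0 < m := ENNReal.toReal_pos hmt0 hmttop
  have hcov : ∀ n : Fin N, ∑ v, (if n ∈ J v then β v else 0) = m := by
    intro n
    have e1 : ∑ v : Fin N → Bool, (if n ∈ J v then β v else 0)
        = ∑ v ∈ Finset.univ.filter (fun v : Fin N → Bool => v n = true), β v := by
      rw [Finset.sum_filter]
      refine Finset.sum_congr rfl fun v _ => ?_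
      congr 1
      rw [hJdef]
      simp [Finset.mem_filter]
    rw [e1, hmdef, ← hidA n, hmeasA n]
    rw [ENNReal.toReal_sum]
    intro v hv
    rw [Finset.mem_filter] at hv
    exact hBfin v ⟨n, by rw [hJdef]; simp [Finset.mem_filter, hv.2]⟩
  -- the core inequality
  have hcore := coreA (le_of_lt hp₁) hp₂ hCT0 hXt x J β
    (fun v => ENNReal.toReal_nonneg) hm0 ⟨0, hN⟩ hcov
  -- pointwise bound on each atom
  have hpt : ∀ v : Fin N → Bool, ∀ s ∈ B v,
      ENNReal.ofReal (t ^ p * radAvg (sel (J v) x) ^ (p/2)) ≤ (‖g s‖₊ : ℝ≥0∞) ^ p := by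
    intro v s hs
    have hcontr : t ^ 2 * radAvg (sel (J v) x) ≤ radAvg (fun n => f n s • x n) := by
      set a : Fin N → ℝ := fun n => if n ∈ J v then t / f n s else 0 with hadef
      have hfs : ∀ n ∈ J v, t < |f n s| := fun n hn => hBA v n hn hs
      have habs : ∀ n, |a n| ≤ 1 := by
        intro n
        rw [hadef]
        simp only []
        split
        · next hn =>
          rw [abs_div, abs_of_pos ht0, div_le_one (lt_trans ht0 (hfs n hn))]
          exact le_of_lt (hfs n hn)
        · simp
      have heq : ∀ n, a n • (f n s • x n) = t • sel (J v) x n := by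
        intro n
        rw [hadef]
        simp only []
        by_cases hn : n ∈ J v
        · rw [if_pos hn, smul_smul, div_mul_cancel₀]
          · show t • x n = t • sel (J v) x n
            rw [show sel (J v) x n = x n from by
              show (if n ∈ J v then x n else 0) = x n
              rw [if_pos hn]]
          · intro hcon
            have := hfs n hn
            rw [hcon] at this
            simp at this
            linarith
        · rw [if_neg hn, zero_smul]
          rw [show sel (J v) x n = 0 from by
            show (if n ∈ J v then x n else 0) = 0
            rw [if_neg hn], smul_zero]
      have h1 := radAvg_contraction a (fun n => f n s • x n) habs
      have h2 : radAvg (fun n => a n • (f n s • x n))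
          = t ^ 2 * radAvg (sel (J v) x) := by
        rw [show (fun n => a n • (f n s • x n)) = fun n => t • sel (J v) x n from
          funext heq]
        exact radAvg_smul t (sel (J v) x)
      rw [h2] at h1
      exact h1
    have hnng : (‖g s‖₊ : ℝ≥0∞) = ENNReal.ofReal (g s) := Real.enorm_eq_ofReal (hg0 s)
    rw [hnng, ENNReal.ofReal_rpow_of_nonneg (hg0 s) (le_of_lt hp0)]
    refine ENNReal.ofReal_le_ofReal ?_
    have hgp : g s ^ p = radAvg (fun n => f n s • x n) ^ (p/2) := by
      rw [hgdef]
      exact sqrt_rpow' (radAvg_nonneg _)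
    rw [hgp]
    calc t ^ p * radAvg (sel (J v) x) ^ (p/2)
        = (t ^ 2 * radAvg (sel (J v) x)) ^ (p/2) := by
          rw [Real.mul_rpow (by positivity) (radAvg_nonneg _)]
          congr 1
          rw [← Real.rpow_natCast t 2, ← Real.rpow_mul (le_of_lt ht0)]
          congr 1
          push_cast
          ring
      _ ≤ radAvg (fun n => f n s • x n) ^ (p/2) :=
          Real.rpow_le_rpow (mul_nonneg (by positivity) (radAvg_nonneg _)) hcontr
            (by positivity)
  -- integral lower bound
  have hint : ∑ v : Fin N → Bool,
      μ (B v) * ENNReal.ofReal (t ^ p * radAvg (sel (J v) x) ^ (p/2)) ≤ Itg := by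
    have h1 : ∀ v : Fin N → Bool,
        μ (B v) * ENNReal.ofReal (t ^ p * radAvg (sel (J v) x) ^ (p/2))
          ≤ ∫⁻ s in B v, (‖g s‖₊ : ℝ≥0∞) ^ p ∂μ := by
      intro v
      rw [mul_comm]
      rw [← setLIntegral_const (B v) (ENNReal.ofReal (t ^ p * radAvg (sel (J v) x) ^ (p/2)))]
      exact setLIntegral_mono' (hBmeas v) fun s hs => hpt v s hs
    refine le_trans (Finset.sum_le_sum fun v _ => h1 v) ?_
    rw [← lintegral_biUnion_finset hdisj (fun v _ => hBmeas v)]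
    exact lintegral_mono' Measure.restrict_le_self le_rfl
  -- assemble everything
  rw [heLp]
  set ρ : (Fin N → Bool) → ℝ := fun v => radAvg (sel (J v) x) ^ (p/2) with hρdef
  have hρ0 : ∀ v, 0 ≤ ρ v := fun v => Real.rpow_nonneg (radAvg_nonneg _) _
  have hmeq : μ (A ⟨0, hN⟩) = ENNReal.ofReal m := by
    rw [hmdef, ENNReal.ofReal_toReal hmttop]
  have htp0 : (0:ℝ) ≤ t ^ p := Real.rpow_nonneg (le_of_lt ht0) p
  have h8 : 8 * CT ^ p ≤ (8*(CT+1)) ^ p := by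
    rw [Real.mul_rpow (by norm_num) (by positivity)]
    have h8p : (8:ℝ) ≤ 8 ^ p := by
      calc (8:ℝ) = 8 ^ (1:ℝ) := (Real.rpow_one 8).symm
        _ ≤ 8 ^ p := Real.rpow_le_rpow_of_exponent_le (by norm_num) (le_of_lt hp₁)
    have hCp : CT ^ p ≤ (CT+1) ^ p := Real.rpow_le_rpow hCT0 (by linarith) (le_of_lt hp0)
    exact mul_le_mul h8p hCp (Real.rpow_nonneg hCT0 p) (by positivity)
  have hLp : (ENNReal.ofReal t * μ (A ⟨0, hN⟩) ^ (1/p) * ENNReal.ofReal (Real.sqrt (radAvg x))) ^ p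
      ≤ ENNReal.ofReal ((8*(CT+1)) ^ p) * Itg := by
    have e1 : (ENNReal.ofReal t * μ (A ⟨0, hN⟩) ^ (1/p)
        * ENNReal.ofReal (Real.sqrt (radAvg x))) ^ p
        = ENNReal.ofReal (t ^ p * m * radAvg x ^ (p/2)) := by
      rw [ENNReal.mul_rpow_of_nonneg _ _ (le_of_lt hp0)]
      rw [ENNReal.mul_rpow_of_nonneg _ _ (le_of_lt hp0)]
      rw [← ENNReal.rpow_mul (μ (A ⟨0, hN⟩)) (1/p) p, one_div_mul_cancel (ne_of_gt hp0),
        ENNReal.rpow_one]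
      rw [ENNReal.ofReal_rpow_of_nonneg (le_of_lt ht0) (le_of_lt hp0)]
      rw [ENNReal.ofReal_rpow_of_nonneg (Real.sqrt_nonneg _) (le_of_lt hp0)]
      rw [sqrt_rpow' (radAvg_nonneg x), hmeq]
      rw [← ENNReal.ofReal_mul htp0, ← ENNReal.ofReal_mul (mul_nonneg htp0 (le_of_lt hm0))]
    rw [e1]
    have e2 : t ^ p * m * radAvg x ^ (p/2)
        ≤ t ^ p * (8 * CT ^ p * ∑ v, β v * ρ v) := by
      rw [mul_assoc]
      exact mul_le_mul_of_nonneg_left hcore htp0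
    have e3 : t ^ p * (8 * CT ^ p * ∑ v, β v * ρ v)
        = ∑ v : Fin N → Bool, 8 * CT ^ p * (β v * (t ^ p * ρ v)) := by
      rw [Finset.mul_sum, Finset.mul_sum]
      exact Finset.sum_congr rfl fun v _ => by ring
    have e4 : ENNReal.ofReal (t ^ p * m * radAvg x ^ (p/2))
        ≤ ∑ v : Fin N → Bool, ENNReal.ofReal (8 * CT ^ p * (β v * (t ^ p * ρ v))) := by
      refine le_trans (ENNReal.ofReal_le_ofReal (e2.trans (le_of_eq e3))) ?_
      rw [ENNReal.ofReal_sum_of_nonneg fun v _ =>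
        mul_nonneg (mul_nonneg (by norm_num) (Real.rpow_nonneg hCT0 p))
          (mul_nonneg ENNReal.toReal_nonneg (mul_nonneg htp0 (hρ0 v)))]
    refine e4.trans ?_
    have e5 : ∀ v : Fin N → Bool, ENNReal.ofReal (8 * CT ^ p * (β v * (t ^ p * ρ v)))
        ≤ ENNReal.ofReal (8 * CT ^ p) * (μ (B v) * ENNReal.ofReal (t ^ p * ρ v)) := by
      intro v
      rw [ENNReal.ofReal_mul (mul_nonneg (by norm_num) (Real.rpow_nonneg hCT0 p)),
        ENNReal.ofReal_mul ENNReal.toReal_nonneg]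
      refine mul_le_mul_right (mul_le_mul_left ?_ _) _
      exact ENNReal.ofReal_toReal_le
    calc ∑ v : Fin N → Bool, ENNReal.ofReal (8 * CT ^ p * (β v * (t ^ p * ρ v)))
        ≤ ∑ v : Fin N → Bool,
            ENNReal.ofReal (8 * CT ^ p) * (μ (B v) * ENNReal.ofReal (t ^ p * ρ v)) :=
          Finset.sum_le_sum fun v _ => e5 v
      _ = ENNReal.ofReal (8 * CT ^ p)
            * ∑ v : Fin N → Bool, μ (B v) * ENNReal.ofReal (t ^ p * ρ v) := by
          rw [Finset.mul_sum]
      _ ≤ ENNReal.ofReal (8 * CT ^ p) * Itg := mul_le_mul_right hint _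
      _ ≤ ENNReal.ofReal ((8*(CT+1)) ^ p) * Itg :=
          mul_le_mul_left (ENNReal.ofReal_le_ofReal h8) _
  have hpow : ∀ z : ℝ≥0∞, (z ^ p) ^ (1/p) = z := by
    intro z
    rw [← ENNReal.rpow_mul, mul_one_div, div_self (ne_of_gt hp0), ENNReal.rpow_one]
  calc ENNReal.ofReal t * μ (A ⟨0, hN⟩) ^ (1/p) * ENNReal.ofReal (Real.sqrt (radAvg x))
      = ((ENNReal.ofReal t * μ (A ⟨0, hN⟩) ^ (1/p)
          * ENNReal.ofReal (Real.sqrt (radAvg x))) ^ p) ^ (1/p) := (hpow _).symm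
    _ ≤ (ENNReal.ofReal ((8*(CT+1)) ^ p) * Itg) ^ (1/p) :=
        ENNReal.rpow_le_rpow hLp (by positivity)
    _ = ENNReal.ofReal (8*(CT+1)) * Itg ^ (1/p) := by
        rw [ENNReal.mul_rpow_of_nonneg _ _ (by positivity)]
        congr 1
        rw [← ENNReal.ofReal_rpow_of_nonneg (by positivity) (le_of_lt hp0)]
        exact hpow _
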